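/- arXiv:1406.5886 — 4 statements merged into one kernel-verified Lean document; each statement's English description precedes it below -/
import Mathlib

section
/- Let m, L be positive integers, let H be a real m×L matrix, let P > 0, and let a ∈ ℝ^L with a ≠ 0. Then the supremum over b ∈ ℝ^m of (1/2)·log₂( P / (‖b‖² + P‖Hᵀb − a‖²) ) is attained and equals −(1/2)·log₂( aᵀ(I_L + P·HᵀH)⁻¹a ). -/
/-!
With `N = I + P HᵀH` (positive definite) and `c = N⁻¹ a`, completing the square at `b⋆ = P H c`
gives `‖b‖² + P‖Hᵀb − a‖² = P aᵀc + ‖b − b⋆‖² + P‖Hᵀ(b − b⋆)‖²`. So this effective noise is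
minimised at `b⋆`, with value `P aᵀN⁻¹a > 0` since `N⁻¹` is positive definite, and the rate,
antitone in the effective noise, is maximised there.
-/

open Matrix

variable {m n : Type*} [Fintype m] [Fintype n] [DecidableEq n]

def effectiveNoise (H : Matrix m n ℝ) (P : ℝ) (a : n → ℝ) (b : m → ℝ) : ℝ :=
  b ⬝ᵥ b + P * ((Hᵀ *ᵥ b - a) ⬝ᵥ (Hᵀ *ᵥ b - a))

theorem posDef_one_add_smul_transpose_mul_self (H : Matrix m n ℝ) {P : ℝ} (hP : 0 ≤ P) :
    (1 + P • (Hᵀ * H)).PosDef :=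
  PosDef.one.add_posSemidef <| by
    simpa using (posSemidef_conjTranspose_mul_self H).smul hP

theorem effectiveNoise_eq_add_sq (H : Matrix m n ℝ) (P : ℝ) {a c : n → ℝ}
    (hc : (1 + P • (Hᵀ * H)) *ᵥ c = a) (b : m → ℝ) :
    effectiveNoise H P a b = P * (a ⬝ᵥ c) + (b - P • H *ᵥ c) ⬝ᵥ (b - P • H *ᵥ c)
      + P * ((Hᵀ *ᵥ (b - P • H *ᵥ c)) ⬝ᵥ (Hᵀ *ᵥ (b - P • H *ᵥ c))) := by
  set d := b - P • H *ᵥ c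
  have hb : b = d + P • H *ᵥ c := by simp [d]
  have ha : a = c + P • Hᵀ *ᵥ (H *ᵥ c) := by
    rw [← hc, add_mulVec, one_mulVec, smul_mulVec, mulVec_mulVec]
  have hres : Hᵀ *ᵥ b - a = Hᵀ *ᵥ d - c := by
    rw [hb, ha, mulVec_add, mulVec_smul]; abel
  have hcross : (Hᵀ *ᵥ d) ⬝ᵥ c = d ⬝ᵥ (H *ᵥ c) := by
    rw [mulVec_transpose, ← dotProduct_mulVec]
  have hgram : (Hᵀ *ᵥ (H *ᵥ c)) ⬝ᵥ c = (H *ᵥ c) ⬝ᵥ (H *ᵥ c) := by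
    rw [mulVec_transpose, ← dotProduct_mulVec]
  rw [effectiveNoise, hres, hb, ha]
  simp only [dotProduct_add, add_dotProduct, dotProduct_sub, sub_dotProduct,
    dotProduct_smul, smul_dotProduct, smul_eq_mul, dotProduct_comm c, dotProduct_comm (H *ᵥ c) d,
    hcross, hgram]
  ring

theorem effectiveNoise_smul_mulVec_eq (H : Matrix m n ℝ) (P : ℝ) {a c : n → ℝ}
    (hc : (1 + P • (Hᵀ * H)) *ᵥ c = a) :
    effectiveNoise H P a (P • H *ᵥ c) = P * (a ⬝ᵥ c) := by
  simpa using effectiveNoise_eq_add_sq H P hc (P • H *ᵥ c)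

theorem le_effectiveNoise (H : Matrix m n ℝ) {P : ℝ} (hP : 0 ≤ P) {a c : n → ℝ}
    (hc : (1 + P • (Hᵀ * H)) *ᵥ c = a) (b : m → ℝ) :
    P * (a ⬝ᵥ c) ≤ effectiveNoise H P a b := by
  set d := b - P • H *ᵥ c
  have hd : 0 ≤ d ⬝ᵥ d := by simpa using dotProduct_self_star_nonneg d
  have hHd : 0 ≤ (Hᵀ *ᵥ d) ⬝ᵥ (Hᵀ *ᵥ d) := by simpa using dotProduct_self_star_nonneg (Hᵀ *ᵥ d)
  rw [effectiveNoise_eq_add_sq H P hc b]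
  nlinarith

theorem stmt1_general (m L : ℕ)
    (H : Matrix (Fin m) (Fin L) ℝ) (P : ℝ) (hP : 0 < P)
    (a : Fin L → ℝ) (ha : a ≠ 0) :
    let R : (Fin m → ℝ) → ℝ :=
      fun b => (1/2) * Real.logb 2 (P / (b ⬝ᵥ b + P * ((Hᵀ *ᵥ b - a) ⬝ᵥ (Hᵀ *ᵥ b - a))))
    ∃ bstar : Fin m → ℝ, (∀ b : Fin m → ℝ, R b ≤ R bstar) ∧
      R bstar = -((1/2) *
        Real.logb 2 (a ⬝ᵥ (((1 : Matrix (Fin L) (Fin L) ℝ) + P • (Hᵀ * H))⁻¹ *ᵥ a))) := by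
  intro R
  have hN := posDef_one_add_smul_transpose_mul_self H hP.le
  set c := ((1 : Matrix (Fin L) (Fin L) ℝ) + P • (Hᵀ * H))⁻¹ *ᵥ a
  have hc : (1 + P • (Hᵀ * H)) *ᵥ c = a := by
    rw [mulVec_mulVec, mul_nonsing_inv _ ((isUnit_iff_isUnit_det _).mp hN.isUnit), one_mulVec]
  have hq : 0 < a ⬝ᵥ c := by simpa using hN.inv.dotProduct_mulVec_pos ha
  have hPq : 0 < P * (a ⬝ᵥ c) := mul_pos hP hq
  have hmin := effectiveNoise_smul_mulVec_eq H P hc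
  refine ⟨P • H *ᵥ c, fun b => ?_, ?_⟩
  · change 1 / 2 * Real.logb 2 (P / effectiveNoise H P a b)
      ≤ 1 / 2 * Real.logb 2 (P / effectiveNoise H P a (P • H *ᵥ c))
    have hle := le_effectiveNoise H hP.le hc b
    rw [hmin]
    gcongr
    · norm_num
    · exact div_pos hP (hPq.trans_le hle)
  · change 1 / 2 * Real.logb 2 (P / effectiveNoise H P a (P • H *ᵥ c)) = _
    rw [hmin, div_mul_cancel_left₀ hP.ne', Real.logb_inv]
    ring

/-- For `H ∈ ℝ^{m×L}`, `P > 0` and `a ∈ ℝ^L` nonzero, the supremum over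
`b ∈ ℝ^m` of the computation rate `(1/2)·log₂(P/(‖b‖² + P‖Hᵀb − a‖²))` is attained and
equals `−(1/2)·log₂(aᵀ(I_L + P·HᵀH)⁻¹a)`. -/
theorem stmt1 (m L : ℕ) (hm : 0 < m) (hL : 0 < L)
    (H : Matrix (Fin m) (Fin L) ℝ) (P : ℝ) (hP : 0 < P)
    (a : Fin L → ℝ) (ha : a ≠ 0) :
    let R : (Fin m → ℝ) → ℝ :=
      fun b => (1/2) * Real.logb 2 (P / (b ⬝ᵥ b + P * ((Hᵀ *ᵥ b - a) ⬝ᵥ (Hᵀ *ᵥ b - a))))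
    ∃ bstar : Fin m → ℝ, (∀ b : Fin m → ℝ, R b ≤ R bstar) ∧
      R bstar = -((1/2) *
        Real.logb 2 (a ⬝ᵥ (((1 : Matrix (Fin L) (Fin L) ℝ) + P • (Hᵀ * H))⁻¹ *ᵥ a))) :=
  stmt1_general m L H P hP a ha
end

section
/- Let L be a positive integer, let m be a positive integer, let H be a real m×L matrix, let P > 0, and let A be an L×L matrix with integer entries and det A ≠ 0, with columns a₁,…,a_L ∈ ℤ^L. Then Σ_{i=1}^{L} ( −(1/2)·log₂( aᵢᵀ(I_L + P·HᵀH)⁻¹aᵢ ) ) ≤ (1/2)·log₂ det(I_L + P·HᵀH). In other words, the sum of the compute-and-forward computation rates of L linearly independent integer equations never exceeds the multiple access channel sum capacity. -/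
/-!
Write `(I + P HᵀH)⁻¹ = YᵀY`. Then `aᵢᵀ (I + P HᵀH)⁻¹ aᵢ` is the squared length of the `i`-th
column of `Y A`, so by Hadamard's inequality the product of these quadratic forms is at least
`det (Y A)² = (det A)² / det (I + P HᵀH) ≥ 1 / det (I + P HᵀH)`, and `−½ log₂` turns this product
bound into the rate bound.
-/

open Matrix

namespace Matrix

theorem det_sq_le_prod_sum_sq {n : ℕ} (T : Matrix (Fin n) (Fin n) ℝ) :
    T.det ^ 2 ≤ ∏ i, ∑ j, T j i ^ 2 := by
  have : Fact (Module.finrank ℝ (EuclideanSpace ℝ (Fin n)) = n) :=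
    ⟨finrank_euclideanSpace_fin⟩
  let b := EuclideanSpace.basisFun (Fin n) ℝ
  let v : Fin n → EuclideanSpace ℝ (Fin n) := fun i => WithLp.toLp 2 fun j => T j i
  have hdet : b.toBasis.det v = T.det := by
    rw [Module.Basis.det_apply]
    rfl
  have hnorm : ∀ i, ‖v i‖ ^ 2 = ∑ j, T j i ^ 2 := fun i => by
    simp [v, EuclideanSpace.norm_sq_eq]
  have hvol : |T.det| ≤ ∏ i, ‖v i‖ := by
    rw [← hdet, ← b.toBasis.orientation.volumeForm_robust' b v]
    exact b.toBasis.orientation.abs_volumeForm_apply_le v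
  calc T.det ^ 2 = |T.det| ^ 2 := (sq_abs _).symm
    _ ≤ (∏ i, ‖v i‖) ^ 2 := pow_le_pow_left₀ (abs_nonneg _) hvol 2
    _ = ∏ i, ∑ j, T j i ^ 2 := by simp only [← Finset.prod_pow, hnorm]

open scoped MatrixOrder in
theorem PosSemidef.det_mul_det_sq_le_prod {n : ℕ} {W : Matrix (Fin n) (Fin n) ℝ}
    (hW : W.PosSemidef) (B : Matrix (Fin n) (Fin n) ℝ) :
    W.det * B.det ^ 2 ≤ ∏ i, (fun j => B j i) ⬝ᵥ (W *ᵥ fun j => B j i) := by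
  obtain ⟨Y, rfl⟩ := CStarAlgebra.nonneg_iff_eq_star_mul_self.mp hW.nonneg
  have hquad : ∀ x : Fin n → ℝ, x ⬝ᵥ (star Y * Y) *ᵥ x = ∑ j, (Y *ᵥ x) j ^ 2 := fun x => by
    rw [← mulVec_mulVec, dotProduct_mulVec, star_eq_conjTranspose,
      conjTranspose_eq_transpose_of_trivial, vecMul_transpose, dotProduct_comm]
    simp only [dotProduct, sq]
  calc (star Y * Y).det * B.det ^ 2 = (Y * B).det ^ 2 := by
        rw [det_mul, det_mul, star_eq_conjTranspose, conjTranspose_eq_transpose_of_trivial,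
          det_transpose]
        ring
    _ ≤ ∏ i, ∑ j, (Y * B) j i ^ 2 := det_sq_le_prod_sum_sq _
    _ = _ := by
        simp only [hquad]
        rfl

theorem one_add_smul_transpose_mul_self_posDef {m n : Type*} [Fintype m] [Fintype n]
    [DecidableEq n] (H : Matrix m n ℝ) {P : ℝ} (hP : 0 ≤ P) :
    (1 + P • (Hᵀ * H)).PosDef :=
  PosDef.one.add_posSemidef ((posSemidef_conjTranspose_mul_self H).smul hP)

theorem one_le_det_intCast_sq {n : Type*} [Fintype n] [DecidableEq n]
    {A : Matrix n n ℤ} (hA : A.det ≠ 0) : 1 ≤ (A.map (Int.cast : ℤ → ℝ)).det ^ 2 := by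
  rw [← Int.cast_det]
  exact_mod_cast one_le_sq_iff_one_le_abs _ |>.mpr (Int.one_le_abs hA)

end Matrix

theorem stmt6_general (L m : ℕ)
    (H : Matrix (Fin m) (Fin L) ℝ) (P : ℝ) (hP : 0 < P)
    (A : Matrix (Fin L) (Fin L) ℤ) (hA : A.det ≠ 0) :
    ∑ i : Fin L,
        (-((1/2) * Real.logb 2
          ((fun j => (A j i : ℝ)) ⬝ᵥ
            (((1 : Matrix (Fin L) (Fin L) ℝ) + P • (Hᵀ * H))⁻¹ *ᵥ
              fun j => (A j i : ℝ)))))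
      ≤ (1/2) * Real.logb 2 ((1 : Matrix (Fin L) (Fin L) ℝ) + P • (Hᵀ * H)).det := by
  set M : Matrix (Fin L) (Fin L) ℝ := 1 + P • (Hᵀ * H)
  set q : Fin L → ℝ := fun i => (fun j => (A j i : ℝ)) ⬝ᵥ (M⁻¹ *ᵥ fun j => (A j i : ℝ))
  have hM : M.PosDef := one_add_smul_transpose_mul_self_posDef H hP.le
  have hMdet : 0 < M.det := hM.det_pos
  have hprod : M.det⁻¹ ≤ ∏ i, q i := by
    have hWdet : M⁻¹.det = M.det⁻¹ := by rw [det_nonsing_inv, Ring.inverse_eq_inv']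
    calc M.det⁻¹ ≤ M⁻¹.det * (A.map (Int.cast : ℤ → ℝ)).det ^ 2 := by
          rw [hWdet]
          exact le_mul_of_one_le_right (by positivity) (one_le_det_intCast_sq hA)
      _ ≤ ∏ i, q i := hM.inv.posSemidef.det_mul_det_sq_le_prod _
  have hq : ∀ i ∈ Finset.univ, q i ≠ 0 :=
    Finset.prod_ne_zero_iff.mp (lt_of_lt_of_le (by positivity) hprod).ne'
  have hlog : -Real.logb 2 M.det ≤ Real.logb 2 (∏ i, q i) := by
    rw [← Real.logb_inv]
    exact Real.logb_le_logb_of_le (by norm_num) (by positivity) hprod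
  rw [Real.logb_prod _ _ hq] at hlog
  show ∑ i, -((1/2) * Real.logb 2 (q i)) ≤ (1/2) * Real.logb 2 M.det
  rw [Finset.sum_neg_distrib, ← Finset.mul_sum]
  linarith

/-- for an integer `L×L` matrix `A` with `det A ≠ 0` and columns
`a₁,…,a_L`, the sum of the compute-and-forward computation rates
`−(1/2)·log₂(aᵢᵀ(I_L + P·HᵀH)⁻¹aᵢ)` is at most the MAC sum capacity
`(1/2)·log₂ det(I_L + P·HᵀH)`. -/
theorem stmt6 (L m : ℕ) (hL : 0 < L) (hm : 0 < m)
    (H : Matrix (Fin m) (Fin L) ℝ) (P : ℝ) (hP : 0 < P)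
    (A : Matrix (Fin L) (Fin L) ℤ) (hA : A.det ≠ 0) :
    ∑ i : Fin L,
        (-((1/2) * Real.logb 2
          ((fun j => (A j i : ℝ)) ⬝ᵥ
            (((1 : Matrix (Fin L) (Fin L) ℝ) + P • (Hᵀ * H))⁻¹ *ᵥ
              fun j => (A j i : ℝ)))))
      ≤ (1/2) * Real.logb 2 ((1 : Matrix (Fin L) (Fin L) ℝ) + P • (Hᵀ * H)).det :=
  stmt6_general L m H P hP A hA
end

section
/- Let h ∈ ℝ², P > 0, and let a, b ∈ ℤ² be linearly independent over ℝ. Define q(x) = ‖x‖² − P·(hᵀx)²/(1 + P‖h‖²) for x ∈ ℝ². Then it is not the case that both −log₂ q(a) > (1/2)·log₂(1 + P‖h‖²) and −log₂ q(b) > (1/2)·log₂(1 + P‖h‖²). That is, at most one of two linearly independent integer coefficient vectors can have its symmetric compute-and-forward rate point outside the two-user MAC capacity region. -/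
open Matrix

set_option maxHeartbeats 1000000 in
/-- for `h ∈ ℝ²`, `P > 0` and linearly independent integer vectors
`a, b ∈ ℤ²`, with `q(x) = ‖x‖² − P·(hᵀx)²/(1 + P‖h‖²)`, it cannot happen that both
`−log₂ q(a)` and `−log₂ q(b)` exceed the MAC sum capacity `(1/2)·log₂(1 + P‖h‖²)`:
at most one of two linearly independent coefficient vectors can lie outside the
two-user MAC capacity region. -/
theorem stmt8 (h : Fin 2 → ℝ) (P : ℝ) (hP : 0 < P) (a b : Fin 2 → ℤ)
    (hab : LinearIndependent ℝ ![(fun i => (a i : ℝ)), (fun i => (b i : ℝ))]) :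
    let q : (Fin 2 → ℝ) → ℝ :=
      fun x => x ⬝ᵥ x - P * (h ⬝ᵥ x) ^ 2 / (1 + P * (h ⬝ᵥ h))
    ¬ ((-Real.logb 2 (q (fun i => (a i : ℝ))) > (1/2) * Real.logb 2 (1 + P * (h ⬝ᵥ h))) ∧
       (-Real.logb 2 (q (fun i => (b i : ℝ))) > (1/2) * Real.logb 2 (1 + P * (h ⬝ᵥ h)))) := by
  intro q
  rintro ⟨ha, hb⟩
  -- determinant of the integer matrix is nonzero
  have hdetR : (a 0 : ℝ) * (b 1 : ℝ) - (a 1 : ℝ) * (b 0 : ℝ) ≠ 0 := by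
    have hu : IsUnit (Matrix.of ![(fun i => (a i : ℝ)), (fun i => (b i : ℝ))]) := by
      rw [← Matrix.linearIndependent_rows_iff_isUnit]
      exact hab
    have hd := ((Matrix.isUnit_iff_isUnit_det _).mp hu).ne_zero
    rw [Matrix.det_fin_two] at hd
    simpa [Matrix.of_apply] using hd
  have hdetZ : a 0 * b 1 - a 1 * b 0 ≠ 0 := by
    intro hz
    apply hdetR
    have : ((a 0 * b 1 - a 1 * b 0 : ℤ) : ℝ) = 0 := by rw [hz]; norm_num
    push_cast at this
    linarith
  have hdet2 : (1 : ℝ) ≤ ((a 0 : ℝ) * (b 1 : ℝ) - (a 1 : ℝ) * (b 0 : ℝ)) ^ 2 := by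
    have h0 : (0 : ℤ) < (a 0 * b 1 - a 1 * b 0) ^ 2 := sq_pos_of_ne_zero hdetZ
    have h1 : (1 : ℤ) ≤ (a 0 * b 1 - a 1 * b 0) ^ 2 := by
      have := Int.add_one_le_iff.mpr h0
      linarith
    have : ((1 : ℤ) : ℝ) ≤ (((a 0 * b 1 - a 1 * b 0) ^ 2 : ℤ) : ℝ) := by exact_mod_cast h1
    push_cast at this
    linarith
  -- dot products in coordinates
  have hhh : h ⬝ᵥ h = h 0 ^ 2 + h 1 ^ 2 := by
    simp [dotProduct, Fin.sum_univ_two]; ring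
  have hS1 : (1 : ℝ) ≤ 1 + P * (h ⬝ᵥ h) := by
    rw [hhh]; nlinarith [sq_nonneg (h 0), sq_nonneg (h 1)]
  have hS0 : (0 : ℝ) < 1 + P * (h ⬝ᵥ h) := by linarith
  have hha : h ⬝ᵥ (fun i => (a i : ℝ)) = h 0 * (a 0 : ℝ) + h 1 * (a 1 : ℝ) := by
    simp [dotProduct, Fin.sum_univ_two]
  have hhb : h ⬝ᵥ (fun i => (b i : ℝ)) = h 0 * (b 0 : ℝ) + h 1 * (b 1 : ℝ) := by
    simp [dotProduct, Fin.sum_univ_two]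
  have haa : (fun i => (a i : ℝ)) ⬝ᵥ (fun i => (a i : ℝ)) = (a 0 : ℝ) ^ 2 + (a 1 : ℝ) ^ 2 := by
    simp [dotProduct, Fin.sum_univ_two]; ring
  have hbbd : (fun i => (b i : ℝ)) ⬝ᵥ (fun i => (b i : ℝ)) = (b 0 : ℝ) ^ 2 + (b 1 : ℝ) ^ 2 := by
    simp [dotProduct, Fin.sum_univ_two]; ring
  -- the quadratic form values, cleared of denominators
  have hqa : q (fun i => (a i : ℝ)) =
      (((a 0 : ℝ) ^ 2 + (a 1 : ℝ) ^ 2) * (1 + P * (h ⬝ᵥ h))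
        - P * (h 0 * (a 0 : ℝ) + h 1 * (a 1 : ℝ)) ^ 2) / (1 + P * (h ⬝ᵥ h)) := by
    show (fun i => (a i : ℝ)) ⬝ᵥ (fun i => (a i : ℝ)) - P * (h ⬝ᵥ fun i => (a i : ℝ)) ^ 2 /
        (1 + P * (h ⬝ᵥ h)) = _
    rw [haa, hha, sub_div, mul_div_cancel_right₀ _ (ne_of_gt hS0)]
  have hqb : q (fun i => (b i : ℝ)) =
      (((b 0 : ℝ) ^ 2 + (b 1 : ℝ) ^ 2) * (1 + P * (h ⬝ᵥ h))
        - P * (h 0 * (b 0 : ℝ) + h 1 * (b 1 : ℝ)) ^ 2) / (1 + P * (h ⬝ᵥ h)) := by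
    show (fun i => (b i : ℝ)) ⬝ᵥ (fun i => (b i : ℝ)) - P * (h ⬝ᵥ fun i => (b i : ℝ)) ^ 2 /
        (1 + P * (h ⬝ᵥ h)) = _
    rw [hbbd, hhb, sub_div, mul_div_cancel_right₀ _ (ne_of_gt hS0)]
  -- nonvanishing of a and b
  have hapos : (0 : ℝ) < (a 0 : ℝ) ^ 2 + (a 1 : ℝ) ^ 2 := by
    rcases eq_or_ne ((a 0 : ℝ)) 0 with h0 | h0
    · rcases eq_or_ne ((a 1 : ℝ)) 0 with h1 | h1
      · exact absurd (by rw [h0, h1]; ring) hdetR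
      · nlinarith [sq_nonneg ((a 0 : ℝ)), sq_pos_of_ne_zero h1]
    · nlinarith [sq_nonneg ((a 1 : ℝ)), sq_pos_of_ne_zero h0]
  have hbpos : (0 : ℝ) < (b 0 : ℝ) ^ 2 + (b 1 : ℝ) ^ 2 := by
    rcases eq_or_ne ((b 0 : ℝ)) 0 with h0 | h0
    · rcases eq_or_ne ((b 1 : ℝ)) 0 with h1 | h1
      · exact absurd (by rw [h0, h1]; ring) hdetR
      · nlinarith [sq_nonneg ((b 0 : ℝ)), sq_pos_of_ne_zero h1]
    · nlinarith [sq_nonneg ((b 1 : ℝ)), sq_pos_of_ne_zero h0]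
  -- positivity of the (cleared) quadratic forms, via Cauchy–Schwarz
  have hQApos : (0 : ℝ) < ((a 0 : ℝ) ^ 2 + (a 1 : ℝ) ^ 2) * (1 + P * (h ⬝ᵥ h))
      - P * (h 0 * (a 0 : ℝ) + h 1 * (a 1 : ℝ)) ^ 2 := by
    rw [hhh]
    nlinarith [sq_nonneg (h 0 * (a 1 : ℝ) - h 1 * (a 0 : ℝ)), hapos, hP.le]
  have hQBpos : (0 : ℝ) < ((b 0 : ℝ) ^ 2 + (b 1 : ℝ) ^ 2) * (1 + P * (h ⬝ᵥ h))
      - P * (h 0 * (b 0 : ℝ) + h 1 * (b 1 : ℝ)) ^ 2 := by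
    rw [hhh]
    nlinarith [sq_nonneg (h 0 * (b 1 : ℝ) - h 1 * (b 0 : ℝ)), hbpos, hP.le]
  have hqapos : (0 : ℝ) < q (fun i => (a i : ℝ)) := by
    rw [hqa]; exact div_pos hQApos hS0
  have hqbpos : (0 : ℝ) < q (fun i => (b i : ℝ)) := by
    rw [hqb]; exact div_pos hQBpos hS0
  -- from the hypotheses: logb of the product is negative
  have hsum : Real.logb 2 (q (fun i => (a i : ℝ)) * q (fun i => (b i : ℝ))
      * (1 + P * (h ⬝ᵥ h))) < 0 := by
    rw [Real.logb_mul (by positivity) (ne_of_gt hS0),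
        Real.logb_mul (ne_of_gt hqapos) (ne_of_gt hqbpos)]
    linarith
  have hlt1 : q (fun i => (a i : ℝ)) * q (fun i => (b i : ℝ)) * (1 + P * (h ⬝ᵥ h)) < 1 :=
    (Real.logb_neg_iff one_lt_two (by positivity)).mp hsum
  -- but the Gram determinant identity gives q(a)·q(b)·S ≥ 1
  have key : (((a 0 : ℝ) ^ 2 + (a 1 : ℝ) ^ 2) * (1 + P * (h 0 ^ 2 + h 1 ^ 2))
        - P * (h 0 * (a 0 : ℝ) + h 1 * (a 1 : ℝ)) ^ 2)
      * (((b 0 : ℝ) ^ 2 + (b 1 : ℝ) ^ 2) * (1 + P * (h 0 ^ 2 + h 1 ^ 2))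
        - P * (h 0 * (b 0 : ℝ) + h 1 * (b 1 : ℝ)) ^ 2)
      = (((a 0 : ℝ) * (b 0 : ℝ) + (a 1 : ℝ) * (b 1 : ℝ)) * (1 + P * (h 0 ^ 2 + h 1 ^ 2))
          - P * (h 0 * (a 0 : ℝ) + h 1 * (a 1 : ℝ)) * (h 0 * (b 0 : ℝ) + h 1 * (b 1 : ℝ))) ^ 2
        + (1 + P * (h 0 ^ 2 + h 1 ^ 2))
          * ((a 0 : ℝ) * (b 1 : ℝ) - (a 1 : ℝ) * (b 0 : ℝ)) ^ 2 := by
    ring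
  have hge : 1 + P * (h ⬝ᵥ h) ≤
      (((a 0 : ℝ) ^ 2 + (a 1 : ℝ) ^ 2) * (1 + P * (h ⬝ᵥ h))
        - P * (h 0 * (a 0 : ℝ) + h 1 * (a 1 : ℝ)) ^ 2)
      * (((b 0 : ℝ) ^ 2 + (b 1 : ℝ) ^ 2) * (1 + P * (h ⬝ᵥ h))
        - P * (h 0 * (b 0 : ℝ) + h 1 * (b 1 : ℝ)) ^ 2) := by
    rw [hhh] at hS0 ⊢
    rw [key]
    nlinarith [sq_nonneg (((a 0 : ℝ) * (b 0 : ℝ) + (a 1 : ℝ) * (b 1 : ℝ))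
        * (1 + P * (h 0 ^ 2 + h 1 ^ 2))
        - P * (h 0 * (a 0 : ℝ) + h 1 * (a 1 : ℝ)) * (h 0 * (b 0 : ℝ) + h 1 * (b 1 : ℝ))),
      hdet2, hS0]
  have hge1 : (1 : ℝ) ≤ q (fun i => (a i : ℝ)) * q (fun i => (b i : ℝ)) * (1 + P * (h ⬝ᵥ h)) := by
    rw [hqa, hqb, div_mul_div_comm, div_mul_eq_mul_div, le_div_iff₀ (by positivity)]
    calc (1 : ℝ) * ((1 + P * (h ⬝ᵥ h)) * (1 + P * (h ⬝ᵥ h)))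
        ≤ ((((a 0 : ℝ) ^ 2 + (a 1 : ℝ) ^ 2) * (1 + P * (h ⬝ᵥ h))
            - P * (h 0 * (a 0 : ℝ) + h 1 * (a 1 : ℝ)) ^ 2)
          * (((b 0 : ℝ) ^ 2 + (b 1 : ℝ) ^ 2) * (1 + P * (h ⬝ᵥ h))
            - P * (h 0 * (b 0 : ℝ) + h 1 * (b 1 : ℝ)) ^ 2)) * (1 + P * (h ⬝ᵥ h)) := by
          rw [one_mul]
          exact mul_le_mul_of_nonneg_right hge (le_of_lt hS0)
      _ = _ := by ring
  linarith
end

section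
/- For every P > 1, R_s^CF(P) > R_s^HS(P), where R_s^CF(P) = max{0, (1/2)·log₂(1/2 + P) − (1/2)·log₂(1 + P/(1+P))} and R_s^HS(P) = max{0, (1/2)·log₂(1/2 + P) − 1}. That is, for all powers P > 1 the proposed compute-and-forward scheme achieves a strictly higher weak secrecy rate than the He–Yener scheme. -/
/-- for every `P > 1` the compute-and-forward weak secrecy rate
`R_s^CF(P) = max{0, (1/2)log₂(1/2+P) − (1/2)log₂(1+P/(1+P))}` strictly exceeds
He–Yener's weak secrecy rate `R_s^HS(P) = max{0, (1/2)log₂(1/2+P) − 1}`. -/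
theorem stmt12 (P : ℝ) (hP : 1 < P) :
    max 0 ((1/2) * Real.logb 2 (1/2 + P) - (1/2) * Real.logb 2 (1 + P / (1 + P)))
      > max 0 ((1/2) * Real.logb 2 (1/2 + P) - 1) := by
  have hden : (0:ℝ) < 1 + P := by linarith
  have hq : 0 < P / (1 + P) := div_pos (by linarith) hden
  have hq2 : P / (1 + P) < 1 := (div_lt_one hden).mpr (by linarith)
  have hpos : (0:ℝ) < 1 + P / (1 + P) := by linarith
  have h1 : 1 + P / (1 + P) < 1/2 + P := by
    have : P / (1 + P) < P - 1/2 := (div_lt_iff₀ hden).mpr (by nlinarith)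
    linarith
  have hlog1 : Real.logb 2 (1 + P / (1 + P)) < Real.logb 2 (1/2 + P) :=
    Real.logb_lt_logb (by norm_num) hpos h1
  have hlog2 : Real.logb 2 (1 + P / (1 + P)) < 1 := by
    have : Real.logb 2 (1 + P / (1 + P)) < Real.logb 2 2 :=
      Real.logb_lt_logb (by norm_num) hpos (by linarith)
    simpa [Real.logb_self_eq_one] using this
  have hA0 : 0 < (1/2) * Real.logb 2 (1/2 + P) - (1/2) * Real.logb 2 (1 + P / (1 + P)) := by
    linarith
  have hAB : (1/2) * Real.logb 2 (1/2 + P) - 1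
      < (1/2) * Real.logb 2 (1/2 + P) - (1/2) * Real.logb 2 (1 + P / (1 + P)) := by
    linarith
  rw [max_eq_right hA0.le]
  exact max_lt hA0 hAB
end
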